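/- arXiv:math/0610040 — 2 statements merged into one kernel-verified Lean document; each statement's English description precedes it below -/
import Mathlib

section
/- Under condition (H2), for every δ > 0, every t ∈ [0,1], every z ∈ E and every n > 0, ℙ_z(|Z(t) − z| ≥ nδ) ≤ 2d · M₁ · exp(−δn/(2d)), where M₁ := sup_{a ∈ ℝ^d : |a| = 1} φ̂(a). -/
open MeasureTheory Filter Set Metric
open scoped ENNReal Topology Pointwise

noncomputable section

namespace GreenLDP

/-- The state space `ℝ^d` with its Euclidean norm. -/
abbrev Sp (d : ℕ) := EuclideanSpace ℝ (Fin d)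

/-- Path space: trajectories indexed by (real) time. -/
abbrev Path (d : ℕ) := ℝ → Sp d

variable {d : ℕ}

/-- A path is right continuous with left limits at all nonnegative times. -/
def CadlagOn (φ : Path d) : Prop :=
  ∀ t : ℝ, 0 ≤ t → ContinuousWithinAt φ (Ici t) t ∧
    (0 < t → ∃ L : Sp d, Tendsto φ (𝓝[<] t) (𝓝 L))

/-- Basic setup: a time-homogeneous Markov process `Z` on an unbounded subset
`E ⊆ ℝ^d`, described through the family of its path-space laws `P z`
(the law of the process started at `z ∈ E`), whose sample paths are right
continuous with left limits. -/
structure MarkovSetup (d : ℕ) where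
  /-- the (unbounded) state space `E ⊆ ℝ^d` -/
  E : Set (Sp d)
  /-- `P z` is the law on path space of the process started at `z`;
  `P z S = ℙ_z(Z(·) ∈ S)` -/
  P : Sp d → Measure (Path d)
  prob : ∀ z, IsProbabilityMeasure (P z)
  unbounded : ¬ Bornology.IsBounded E
  start : ∀ z ∈ E, P z {ω | ω 0 = z} = 1
  stays : ∀ z ∈ E, ∀ᵐ ω ∂ P z, ∀ t : ℝ, 0 ≤ t → ω t ∈ E
  cadlag : ∀ z ∈ E, ∀ᵐ ω ∂ P z, CadlagOn ω
  /-- (time-homogeneous) Markov property: conditionally on the position at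
  time `s`, the law of the shifted path is that of the process restarted there. -/
  markov : ∀ z ∈ E, ∀ s : ℝ, 0 ≤ s → ∀ F : Path d → ℝ≥0∞, Measurable F →
    ∫⁻ ω, F (fun t => ω (s + t)) ∂ P z = ∫⁻ ω, ∫⁻ ω', F ω' ∂ P (ω s) ∂ P z

/-- Green's function `G(z,B) = ∫₀^∞ ℙ_z(Z(t) ∈ B) dt`. -/
def green (P : Sp d → Measure (Path d)) (z : Sp d) (B : Set (Sp d)) : ℝ≥0∞ :=
  ∫⁻ t in Ioi (0 : ℝ), P z {ω | ω t ∈ B}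

/-- First exit time `τ_R = inf {t ≥ 0 : |Z(t)| ≥ R}` from the open ball of
radius `R` (equal to `∞` if the process never exits). -/
def exitTime (ω : Path d) (R : ℝ) : ℝ≥0∞ :=
  ⨅ t ∈ {t : ℝ | 0 ≤ t ∧ R ≤ ‖ω t‖}, ENNReal.ofReal t

/-- Truncated Green's function `G_R(z,B) = ∫₀^∞ ℙ_z(Z(t) ∈ B, τ_R > t) dt`. -/
def greenTrunc (P : Sp d → Measure (Path d)) (R : ℝ) (z : Sp d) (B : Set (Sp d)) : ℝ≥0∞ :=
  ∫⁻ t in Ioi (0 : ℝ), P z {ω | ω t ∈ B ∧ ENNReal.ofReal t < exitTime ω R}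

/-- The scaled path `Z^ε(t) = ε Z(t/ε)`. -/
def scaledPath (ε : ℝ) (ω : Path d) : Path d := fun t => ε • ω (t / ε)

/-- The set `{z ∈ E : |εz − q| < δ}` of admissible starting points. -/
def nearScaled (E : Set (Sp d)) (ε : ℝ) (q : Sp d) (δ : ℝ) : Set (Sp d) :=
  {z ∈ E | ‖ε • z - q‖ < δ}

/-- The set `{z ∈ E : |z − nq| < δn}` of admissible starting points. -/
def nearE (E : Set (Sp d)) (q : Sp d) (n δ : ℝ) : Set (Sp d) :=
  {z ∈ E | ‖z - n • q‖ < δ * n}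

/-- Large deviation lower bound for the scaled variables `Z^ε(T) = εZ(T/ε)` over
open sets:  `lim_{δ→0} liminf_{ε→0} ε log inf_{z∈E,|εz−q|<δ} ℙ_z(Z^ε(T) ∈ O)
≥ −inf_{q'∈O} I(q,q')`.  (Since the inner quantity is monotone in `δ`, the limit
as `δ → 0⁺` is the supremum over `δ > 0`.) -/
def LDPLower (E : Set (Sp d)) (P : Sp d → Measure (Path d)) (T : ℝ)
    (I : Sp d → Sp d → EReal) : Prop :=
  ∀ (q : Sp d) (O : Set (Sp d)), IsOpen O →
    -(⨅ q' ∈ O, I q q') ≤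
      ⨆ δ : {δ : ℝ // 0 < δ},
        liminf (fun ε : ℝ =>
          (ε : EReal) * ENNReal.log
            (⨅ z ∈ nearScaled E ε q δ.1, P z {ω | scaledPath ε ω T ∈ O}))
          (𝓝[>] (0 : ℝ))

/-- Large deviation upper bound for the scaled variables `Z^ε(T) = εZ(T/ε)` over
compact sets:  `lim_{δ→0} limsup_{ε→0} ε log sup_{z∈E,|εz−q|<δ} ℙ_z(Z^ε(T) ∈ V)
≤ −inf_{q'∈V} I(q,q')`. -/
def LDPUpperCompact (E : Set (Sp d)) (P : Sp d → Measure (Path d)) (T : ℝ)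
    (I : Sp d → Sp d → EReal) : Prop :=
  ∀ (q : Sp d) (V : Set (Sp d)), IsCompact V →
    (⨅ δ : {δ : ℝ // 0 < δ},
      limsup (fun ε : ℝ =>
        (ε : EReal) * ENNReal.log
          (⨆ z ∈ nearScaled E ε q δ.1, P z {ω | scaledPath ε ω T ∈ V}))
        (𝓝[>] (0 : ℝ)))
      ≤ -(⨅ q' ∈ V, I q q')

/-- Large deviation upper bound over closed sets (for the full LDP). -/
def LDPUpperClosed (E : Set (Sp d)) (P : Sp d → Measure (Path d)) (T : ℝ)
    (I : Sp d → Sp d → EReal) : Prop :=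
  ∀ (q : Sp d) (V : Set (Sp d)), IsClosed V →
    (⨅ δ : {δ : ℝ // 0 < δ},
      limsup (fun ε : ℝ =>
        (ε : EReal) * ENNReal.log
          (⨆ z ∈ nearScaled E ε q δ.1, P z {ω | scaledPath ε ω T ∈ V}))
        (𝓝[>] (0 : ℝ)))
      ≤ -(⨅ q' ∈ V, I q q')

/-- The weak large deviation principle in `ℝ^d` for `Z^ε(T)` with a lower
semicontinuous rate function `I_T : ℝ^d × ℝ^d → [0,∞)`. -/
def WeakLDP (E : Set (Sp d)) (P : Sp d → Measure (Path d)) (T : ℝ)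
    (I : Sp d → Sp d → ℝ) : Prop :=
  LowerSemicontinuous (fun p : Sp d × Sp d => I p.1 p.2) ∧
  (∀ q q' : Sp d, 0 ≤ I q q') ∧
  LDPLower E P T (fun q q' => ((I q q' : ℝ) : EReal)) ∧
  LDPUpperCompact E P T (fun q q' => ((I q q' : ℝ) : EReal))

/-- Hypothesis (H1): for every `T > 0` the scaled variables `Z^ε(T)` satisfy the
weak large deviation principle with rate function `I_T`. -/
def H1 (E : Set (Sp d)) (P : Sp d → Measure (Path d))
    (I : ℝ → Sp d → Sp d → ℝ) : Prop :=
  ∀ T : ℝ, 0 < T → WeakLDP E P T (I T)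

/-- The jump generating function
`φ̂(a) = sup_{z∈E} sup_{t∈[0,1]} 𝔼_z exp(a·(Z(t)−z))` of hypothesis (H2). -/
def mgf (E : Set (Sp d)) (P : Sp d → Measure (Path d)) (a : Sp d) : ℝ≥0∞ :=
  ⨆ z ∈ E, ⨆ t ∈ Icc (0:ℝ) 1,
    ∫⁻ ω, ENNReal.ofReal (Real.exp ((inner ℝ a (ω t - z) : ℝ))) ∂ P z

/-- Hypothesis (H2): `φ̂(a) < ∞` for every `a ∈ ℝ^d`. -/
def H2 (E : Set (Sp d)) (P : Sp d → Measure (Path d)) : Prop :=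
  ∀ a : Sp d, mgf E P a < ⊤

/-- Hypothesis (H3), communication condition with constant `θ > 0` : there is a
positive function `σ` on `E` with `σ(z)/|z| → 0` as `|z| → ∞` such that for all
`z, z' ∈ E` the probability, starting from `z`, of ever hitting the open ball
`B(z', σ(z'))` is at least `exp(−θ|z'−z|)`. -/
def H3 (E : Set (Sp d)) (P : Sp d → Measure (Path d)) (θ : ℝ) : Prop :=
  0 < θ ∧ ∃ σ : Sp d → ℝ, (∀ z ∈ E, 0 < σ z) ∧
    (∀ η : ℝ, 0 < η → ∃ M : ℝ, ∀ z ∈ E, M ≤ ‖z‖ → σ z < η * ‖z‖) ∧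
    ∀ z ∈ E, ∀ z' ∈ E,
      ENNReal.ofReal (Real.exp (-θ * ‖z' - z‖)) ≤
        P z {ω | ∃ t : ℝ, 0 ≤ t ∧ ω t ∈ ball z' (σ z')}

/-- The set `𝓡` of all possible limits `lim_{ε→0} ε z_ε` with `z_ε ∈ E`. -/
def RSet (E : Set (Sp d)) : Set (Sp d) :=
  {q | ∃ zf : ℝ → Sp d, (∀ ε : ℝ, zf ε ∈ E) ∧
    Tendsto (fun ε : ℝ => ε • zf ε) (𝓝[>] (0:ℝ)) (𝓝 q)}

/-- The quasipotential `I(q,q') = inf_{T>0} I_T(q,q')`. -/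
def quasipot (I : ℝ → Sp d → Sp d → ℝ) (q q' : Sp d) : ℝ :=
  ⨅ T : {T : ℝ // 0 < T}, I T.1 q q'

-- `Î(q,q') = I(q,q')` for `q ≠ q'` and `Î(q,q) = 0`.
open Classical in
def quasipotHat (I : ℝ → Sp d → Sp d → ℝ) (q q' : Sp d) : ℝ :=
  if q = q' then 0 else quasipot I q q'

/-- The Skorohod distance on `D([0,T],ℝ^d)` :
`d(φ,ψ) = inf_λ max(sup_{t∈[0,T]}|λ(t)−t|, sup_{t∈[0,T]}|φ(λ(t))−ψ(t)|)`,
the infimum being over increasing bijections `λ` of `[0,T]`. -/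
def skorohodDist (T : ℝ) (φ ψ : Path d) : ℝ :=
  sInf {r : ℝ | 0 ≤ r ∧ ∃ lam : ℝ → ℝ, StrictMonoOn lam (Icc 0 T) ∧
    lam '' Icc 0 T = Icc 0 T ∧
    ∀ t ∈ Icc 0 T, |lam t - t| ≤ r ∧ ‖φ (lam t) - ψ t‖ ≤ r}

/-- The Skorohod topology on paths over the time interval `[0,T]`, generated by
the balls of the Skorohod distance. -/
def skorohodTop (d : ℕ) (T : ℝ) : TopologicalSpace (Path d) :=
  TopologicalSpace.generateFrom
    {s | ∃ (φ : Path d) (r : ℝ), 0 < r ∧ s = {ψ | skorohodDist T φ ψ < r}}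

/-- A good rate function on `D([0,T],ℝ^d)` : for every `c ≥ 0` and every compact
`V ⊆ ℝ^d` the set `{φ : φ(0) ∈ V, I_{[0,T]}(φ) ≤ c}` is compact for the
Skorohod topology. -/
def GoodRate (T : ℝ) (J : Path d → ℝ≥0∞) : Prop :=
  ∀ c : ℝ, 0 ≤ c → ∀ V : Set (Sp d), IsCompact V →
    @IsCompact _ (skorohodTop d T) {φ : Path d | φ 0 ∈ V ∧ J φ ≤ ENNReal.ofReal c}

/-- Sample path large deviation lower bound on `D([0,T],ℝ^d)`. -/
def SPLDLower (E : Set (Sp d)) (P : Sp d → Measure (Path d)) (T : ℝ)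
    (J : Path d → ℝ≥0∞) : Prop :=
  ∀ (z : Sp d) (𝓞 : Set (Path d)), @IsOpen _ (skorohodTop d T) 𝓞 →
    -(⨅ φ ∈ {φ ∈ 𝓞 | φ 0 = z}, (J φ : EReal)) ≤
      ⨆ δ : {δ : ℝ // 0 < δ},
        liminf (fun ε : ℝ =>
          (ε : EReal) * ENNReal.log
            (⨅ z' ∈ nearScaled E ε z δ.1, P z' {ω | scaledPath ε ω ∈ 𝓞}))
          (𝓝[>] (0 : ℝ))

/-- Sample path large deviation upper bound on `D([0,T],ℝ^d)`. -/
def SPLDUpper (E : Set (Sp d)) (P : Sp d → Measure (Path d)) (T : ℝ)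
    (J : Path d → ℝ≥0∞) : Prop :=
  ∀ (z : Sp d) (F : Set (Path d)), @IsClosed _ (skorohodTop d T) F →
    (⨅ δ : {δ : ℝ // 0 < δ},
      limsup (fun ε : ℝ =>
        (ε : EReal) * ENNReal.log
          (⨆ z' ∈ nearScaled E ε z δ.1, P z' {ω | scaledPath ε ω ∈ F}))
        (𝓝[>] (0 : ℝ)))
      ≤ -(⨅ φ ∈ {φ ∈ F | φ 0 = z}, (J φ : EReal))

/-- The sample path large deviation principle on `D([0,T],ℝ^d)` with a good rate
function `J = I_{[0,T]}`. -/
def SPLD (E : Set (Sp d)) (P : Sp d → Measure (Path d)) (T : ℝ)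
    (J : Path d → ℝ≥0∞) : Prop :=
  GoodRate T J ∧ SPLDLower E P T J ∧ SPLDUpper E P T J

/-- Hypothesis (H1'): for every `T > 0` the scaled processes satisfy the sample
path large deviation principle with good rate function `I_{[0,T]} = Ipath T`,
and `I_T(q,q')` is the infimum of `I_{[0,T]}(φ)` over paths with `φ(0) = q`,
`φ(T) = q'`. -/
def H1' (E : Set (Sp d)) (P : Sp d → Measure (Path d))
    (Ipath : ℝ → Path d → ℝ≥0∞) (I : ℝ → Sp d → Sp d → ℝ) : Prop :=
  ∀ T : ℝ, 0 < T → SPLD E P T (Ipath T) ∧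
    ∀ q q' : Sp d,
      (ENNReal.ofReal (I T q q') : ℝ≥0∞) =
        ⨅ φ ∈ {φ : Path d | φ 0 = q ∧ φ T = q'}, Ipath T φ

/-- `lim_{δ→0} liminf_{n→∞} (1/n) log inf_{z∈E,|z−nq|<δn} G(z, nB)`
(the limit in `δ` being a supremum, by monotonicity). -/
def greenLiminf (E : Set (Sp d)) (P : Sp d → Measure (Path d))
    (q : Sp d) (B : Set (Sp d)) : EReal :=
  ⨆ δ : {δ : ℝ // 0 < δ},
    liminf (fun n : ℕ =>
      ((((n : ℝ)⁻¹ : ℝ)) : EReal) * ENNReal.log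
        (⨅ z ∈ nearE E q n δ.1, green P z ((n : ℝ) • B))) atTop

/-- `lim_{δ→0} limsup_{n→∞} (1/n) log sup_{z∈E,|z−nq|<δn} G(z, nB)`
(the limit in `δ` being an infimum, by monotonicity). -/
def greenLimsup (E : Set (Sp d)) (P : Sp d → Measure (Path d))
    (q : Sp d) (B : Set (Sp d)) : EReal :=
  ⨅ δ : {δ : ℝ // 0 < δ},
    limsup (fun n : ℕ =>
      ((((n : ℝ)⁻¹ : ℝ)) : EReal) * ENNReal.log
        (⨆ z ∈ nearE E q n δ.1, green P z ((n : ℝ) • B))) atTop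


end GreenLDP

/-! A vector of norm at least `s` in `ℝ^d` has a coordinate of absolute value at least `s / d`,
so the event `|Z(t) − z| ≥ s` is covered by the `2d` half-space events `±(Z(t) − z)_i ≥ s / d`.
Each of these is bounded by the exponential Chebyshev inequality in a unit direction `a`, which
costs the factor `φ̂(a) ≤ M₁`. -/

theorem EuclideanSpace.exists_norm_le_card_mul_abs {ι : Type*} [Fintype ι] [Nonempty ι]
    (x : EuclideanSpace ℝ ι) : ∃ i, ‖x‖ ≤ Fintype.card ι * |x i| := by
  classical
  obtain ⟨i, -, hi⟩ :=
    Finset.exists_max_image Finset.univ (fun j => |x j|) Finset.univ_nonempty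
  refine ⟨i, ?_⟩
  calc ‖x‖ = ‖∑ j, x j • EuclideanSpace.basisFun ι ℝ j‖ := by
        conv_lhs => rw [← (EuclideanSpace.basisFun ι ℝ).sum_repr x]
        simp
    _ ≤ ∑ j, |x j| := (norm_sum_le _ _).trans_eq (by simp [norm_smul])
    _ ≤ ∑ _j : ι, |x i| := Finset.sum_le_sum fun j _ => hi j (Finset.mem_univ j)
    _ = Fintype.card ι * |x i| := by simp

section Chernoff

variable {Ω : Type*} [MeasurableSpace Ω] {μ : Measure Ω}

theorem measure_ge_le_lintegral_exp_mul_exp_neg {f : Ω → ℝ} (hf : Measurable f) (r : ℝ) :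
    μ {ω | r ≤ f ω} ≤
      (∫⁻ ω, ENNReal.ofReal (Real.exp (f ω)) ∂μ) * ENNReal.ofReal (Real.exp (-r)) := by
  have hexp : {ω | r ≤ f ω} ⊆
      {ω | ENNReal.ofReal (Real.exp r) ≤ ENNReal.ofReal (Real.exp (f ω))} :=
    fun ω hω => ENNReal.ofReal_le_ofReal (Real.exp_le_exp.2 hω)
  refine (measure_mono hexp).trans <|
    (meas_ge_le_lintegral_div (by fun_prop) ?_ ENNReal.ofReal_ne_top).trans_eq ?_
  · simp [Real.exp_pos]
  · rw [div_eq_mul_inv, ← ENNReal.ofReal_inv_of_pos (Real.exp_pos r), Real.exp_neg]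

theorem measure_norm_ge_le_of_inner_ge {ι : Type*} [Fintype ι] {X : Ω → EuclideanSpace ℝ ι}
    {C : ℝ≥0∞} (hX : ∀ a : EuclideanSpace ℝ ι, ‖a‖ = 1 → ∀ r : ℝ,
      μ {ω | r ≤ inner ℝ a (X ω)} ≤ C * ENNReal.ofReal (Real.exp (-r)))
    {s : ℝ} (hs : 0 < s) :
    μ {ω | s ≤ ‖X ω‖} ≤
      2 * Fintype.card ι * C * ENNReal.ofReal (Real.exp (-s / Fintype.card ι)) := by
  classical
  cases isEmpty_or_nonempty ι
  · have hempty : {ω | s ≤ ‖X ω‖} = ∅ := by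
      ext ω
      simpa [Subsingleton.elim (X ω) 0] using hs
    simp [hempty]
  set r := s / Fintype.card ι
  let e : ι → EuclideanSpace ℝ ι := fun i => EuclideanSpace.single i 1
  have hcover : {ω | s ≤ ‖X ω‖} ⊆
      ⋃ i, ({ω | r ≤ inner ℝ (e i) (X ω)} ∪ {ω | r ≤ inner ℝ (-e i) (X ω)}) := by
    intro ω hω
    obtain ⟨i, hi⟩ := EuclideanSpace.exists_norm_le_card_mul_abs (X ω)
    have hr : r ≤ |X ω i| := by
      rw [div_le_iff₀' (by positivity)]
      exact hω.trans hi
    refine mem_iUnion.2 ⟨i, ?_⟩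
    simpa [e, EuclideanSpace.inner_single_left, inner_neg_left, le_neg] using le_abs.1 hr
  have he : ∀ i, ‖e i‖ = 1 := fun i => by simp [e]
  calc μ {ω | s ≤ ‖X ω‖}
      ≤ ∑ i, (μ {ω | r ≤ inner ℝ (e i) (X ω)} + μ {ω | r ≤ inner ℝ (-e i) (X ω)}) :=
        (measure_mono hcover).trans <| (measure_iUnion_fintype_le _ _).trans <|
          Finset.sum_le_sum fun i _ => measure_union_le _ _
    _ ≤ ∑ _i : ι, (C * ENNReal.ofReal (Real.exp (-r)) + C * ENNReal.ofReal (Real.exp (-r))) :=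
        Finset.sum_le_sum fun i _ =>
          add_le_add (hX _ (he i) r) (hX _ (by rw [norm_neg, he i]) r)
    _ = 2 * Fintype.card ι * C * ENNReal.ofReal (Real.exp (-s / Fintype.card ι)) := by
        simp only [Finset.sum_const, Finset.card_univ, nsmul_eq_mul, r, neg_div]
        ring

end Chernoff

namespace GreenLDP

variable {d : ℕ}

theorem lintegral_exp_inner_le_mgf {E : Set (Sp d)} {z : Sp d} (hz : z ∈ E) {t : ℝ}
    (ht : t ∈ Icc (0 : ℝ) 1) (P : Sp d → Measure (Path d)) (a : Sp d) :
    ∫⁻ ω, ENNReal.ofReal (Real.exp (inner ℝ a (ω t - z))) ∂P z ≤ mgf E P a :=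
  le_iSup₂_of_le z hz <| le_iSup₂_of_le t ht le_rfl

theorem measure_inner_ge_le_mgf {E : Set (Sp d)} {z : Sp d} (hz : z ∈ E) {t : ℝ}
    (ht : t ∈ Icc (0 : ℝ) 1) (P : Sp d → Measure (Path d)) (a : Sp d) (r : ℝ) :
    P z {ω | r ≤ inner ℝ a (ω t - z)} ≤ mgf E P a * ENNReal.ofReal (Real.exp (-r)) :=
  (measure_ge_le_lintegral_exp_mul_exp_neg (by fun_prop) r).trans <|
    mul_le_mul_left (lintegral_exp_inner_le_mgf hz ht P a) _

theorem increment_tail_bound_general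
    {d : ℕ} (M : MarkovSetup d) :
    ∀ δ : ℝ, 0 < δ → ∀ t ∈ Icc (0 : ℝ) 1, ∀ z ∈ M.E, ∀ n : ℝ, 0 < n →
      M.P z {ω | n * δ ≤ ‖ω t - z‖} ≤
        (2 * (d : ℝ≥0∞)) * (⨆ a : {a : Sp d // ‖a‖ = 1}, mgf M.E M.P a.1) *
          ENNReal.ofReal (Real.exp (-(δ * n) / (2 * (d : ℝ)))) := by
  intro δ hδ t ht z hz n hn
  set M₁ := ⨆ a : {a : Sp d // ‖a‖ = 1}, mgf M.E M.P a.1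
  have hdir : ∀ a : Sp d, ‖a‖ = 1 → ∀ r : ℝ,
      M.P z {ω | r ≤ inner ℝ a (ω t - z)} ≤ M₁ * ENNReal.ofReal (Real.exp (-r)) :=
    fun a ha r => (measure_inner_ge_le_mgf hz ht M.P a r).trans <|
      mul_le_mul_left (le_iSup (fun b : {a : Sp d // ‖a‖ = 1} => mgf M.E M.P b.1) ⟨a, ha⟩) _
  calc M.P z {ω | n * δ ≤ ‖ω t - z‖}
      ≤ 2 * d * M₁ * ENNReal.ofReal (Real.exp (-(n * δ) / d)) := by
        simpa using measure_norm_ge_le_of_inner_ge (μ := M.P z) hdir (by positivity : 0 < n * δ)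
    _ ≤ 2 * d * M₁ * ENNReal.ofReal (Real.exp (-(δ * n) / (2 * d))) := by
        gcongr _ * ENNReal.ofReal (Real.exp ?_)
        rw [neg_div, neg_div, mul_comm δ, mul_comm (2 : ℝ), ← div_div, neg_le_neg_iff]
        exact half_le_self (by positivity)

/-- Under (H2), for every `δ > 0`, `t ∈ [0,1]`, `z ∈ E` and
`n > 0`, `ℙ_z(|Z(t) − z| ≥ nδ) ≤ 2d · M₁ · exp(−δn/(2d))` where
`M₁ = sup_{|a|=1} φ̂(a)`. -/
theorem increment_tail_bound
    {d : ℕ} (M : MarkovSetup d) (hH2 : H2 M.E M.P) :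
    ∀ δ : ℝ, 0 < δ → ∀ t ∈ Icc (0 : ℝ) 1, ∀ z ∈ M.E, ∀ n : ℝ, 0 < n →
      M.P z {ω | n * δ ≤ ‖ω t - z‖} ≤
        (2 * (d : ℝ≥0∞)) * (⨆ a : {a : Sp d // ‖a‖ = 1}, mgf M.E M.P a.1) *
          ENNReal.ofReal (Real.exp (-(δ * n) / (2 * (d : ℝ)))) :=
  increment_tail_bound_general M

end GreenLDP
end
end

section
/- Suppose condition (H1') holds (sample path large deviation principle with good rate functions I_{[0,T]}). Then for every T > 0, every q ∈ ℝ^d and every A > 0, there exists R > 0 such that lim_{δ→0} limsup_{n→∞} sup_{z ∈ E : |z − nq| < δn} (1/n) log ℙ_z(τ_{nR} ≤ Tn) ≤ −A, where τ_R := inf{t ≥ 0 : |Z(t)| ≥ R}. -/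
open MeasureTheory Filter Set Metric
open scoped ENNReal Topology Pointwise

noncomputable section

namespace GreenLDP

variable {d : ℕ}

/-!
Goodness of `I_{[0,T+1]}` makes the sublevel set `{φ : φ 0 = q, I_{[0,T+1]}(φ) ≤ A}` compact in the
Skorohod topology, so it lies in a Skorohod ball of some radius `R` around the zero path. A path
that leaves the Euclidean ball of radius `nR` before time `Tn` rescales to a path outside this
Skorohod ball, a closed set on which the rate function exceeds `A`; the sample path upper bound
then gives the exponential rate `-A`.
-/

theorem CadlagOn.eventually_norm_le {φ : Path d} (hφ : CadlagOn φ) {s : ℝ} (hs : 0 ≤ s) :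
    ∃ C : ℝ, ∀ᶠ x in 𝓝[Ici 0] s, ‖φ x‖ ≤ C := by
  have hright : ∀ᶠ x in 𝓝[≥] s, ‖φ x‖ ≤ ‖φ s‖ + 1 :=
    ((hφ s hs).1.norm.eventually_lt_const (lt_add_one _)).mono fun _ => le_of_lt
  rcases hs.eq_or_lt with rfl | hpos
  · exact ⟨_, hright⟩
  obtain ⟨L, hL⟩ := (hφ s hs).2 hpos
  have hleft : ∀ᶠ x in 𝓝[<] s, ‖φ x‖ ≤ ‖L‖ + 1 :=
    (hL.norm.eventually_lt_const (lt_add_one _)).mono fun _ => le_of_lt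
  have hnhds : ∀ᶠ x in 𝓝 s, ‖φ x‖ ≤ max (‖φ s‖ + 1) (‖L‖ + 1) := by
    rw [← nhdsLT_sup_nhdsGE]
    exact eventually_sup.2 ⟨hleft.mono fun _ hx => hx.trans (le_max_right _ _),
      hright.mono fun _ hx => hx.trans (le_max_left _ _)⟩
  exact ⟨_, nhdsWithin_le_nhds hnhds⟩

theorem CadlagOn.bddAbove_norm_Icc {φ : Path d} (hφ : CadlagOn φ) (b : ℝ) :
    BddAbove ((‖φ ·‖) '' Icc 0 b) := by
  refine isCompact_Icc.induction_on (p := fun t => BddAbove ((‖φ ·‖) '' t)) (by simp)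
    (fun _ _ hst ht => ht.mono (image_mono hst))
    (fun _ _ hs ht => by simpa only [image_union] using hs.union ht) fun s hs => ?_
  obtain ⟨C, hC⟩ := hφ.eventually_norm_le hs.1
  exact ⟨{x | ‖φ x‖ ≤ C}, nhdsWithin_mono _ Icc_subset_Ici_self hC,
    ⟨C, forall_mem_image.2 fun _ hx => hx⟩⟩

theorem exists_norm_ge_of_exitTime_lt {ω : Path d} {R t : ℝ}
    (h : exitTime ω R < ENNReal.ofReal t) : ∃ s ∈ Icc 0 t, R ≤ ‖ω s‖ := by
  simp only [exitTime, iInf_lt_iff, exists_prop] at h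
  obtain ⟨s, ⟨hs0, hsR⟩, hst⟩ := h
  exact ⟨s, ⟨hs0, ((ENNReal.ofReal_lt_ofReal_iff'.1 hst).1).le⟩, hsR⟩

def skorohodBall (T : ℝ) (φ : Path d) (r : ℝ) : Set (Path d) :=
  {ψ | skorohodDist T φ ψ < r}

theorem isOpen_skorohodBall {T r : ℝ} (φ : Path d) (hr : 0 < r) :
    IsOpen[skorohodTop d T] (skorohodBall T φ r) :=
  TopologicalSpace.isOpen_generateFrom_of_mem ⟨φ, r, hr, rfl⟩

/-- Without the boundedness hypothesis the infimum defining the distance could be over the empty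
set, where `sInf ∅ = 0`. -/
theorem norm_le_skorohodDist_zero {T u : ℝ} {ψ : Path d}
    (hψ : BddAbove ((‖ψ ·‖) '' Icc 0 T)) (hu : u ∈ Icc 0 T) :
    ‖ψ u‖ ≤ skorohodDist T 0 ψ := by
  obtain ⟨C, hC⟩ := hψ
  rw [mem_upperBounds, forall_mem_image] at hC
  refine le_csInf ⟨max 0 C, le_max_left _ _, id, strictMonoOn_id, image_id _, fun t ht => ?_⟩ ?_
  · simpa using (hC ht).trans (le_max_right 0 C)
  · rintro r ⟨-, lam, -, -, hlam⟩
    simpa using (hlam u hu).2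

theorem GoodRate.exists_sublevel_subset_skorohodBall {T c : ℝ} {J : Path d → ℝ≥0∞}
    (hJ : GoodRate T J) (q : Sp d) (hc : 0 ≤ c) :
    ∃ ρ > 0, {φ : Path d | φ 0 ∈ ({q} : Set (Sp d)) ∧ J φ ≤ ENNReal.ofReal c} ⊆
      skorohodBall T 0 ρ := by
  let := skorohodTop d T
  have hmono : Monotone fun m : ℕ => skorohodBall T (0 : Path d) (m + 1) :=
    fun m k hmk ψ (hψ : skorohodDist T 0 ψ < m + 1) =>
      show skorohodDist T 0 ψ < k + 1 from hψ.trans_le (by gcongr)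
  have hcover : univ ⊆ ⋃ m : ℕ, skorohodBall T (0 : Path d) (m + 1) := fun ψ _ =>
    have ⟨m, hm⟩ := exists_nat_gt (skorohodDist T 0 ψ)
    mem_iUnion.2 ⟨m, show skorohodDist T 0 ψ < m + 1 by linarith⟩
  obtain ⟨m, hm⟩ := (hJ c hc {q} isCompact_singleton).elim_directed_cover _
    (fun m => isOpen_skorohodBall 0 (by positivity)) ((subset_univ _).trans hcover)
    hmono.directed_le
  exact ⟨m + 1, by positivity, hm⟩

theorem coe_le_iInf_of_sublevel_subset {c : ℝ} {J : Path d → ℝ≥0∞} {q : Sp d}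
    {U : Set (Path d)} (hc : 0 ≤ c)
    (hU : {φ : Path d | φ 0 ∈ ({q} : Set (Sp d)) ∧ J φ ≤ ENNReal.ofReal c} ⊆ U) :
    (c : EReal) ≤ ⨅ φ ∈ {φ ∈ Uᶜ | φ 0 = q}, (J φ : EReal) := by
  refine le_iInf₂ fun φ ⟨hφU, hφq⟩ => ?_
  have hJ : ENNReal.ofReal c ≤ J φ := le_of_not_ge fun hle => hφU (hU ⟨hφq, hle⟩)
  calc (c : EReal) = (ENNReal.ofReal c : EReal) := by
        rw [EReal.coe_ennreal_ofReal, max_eq_left hc]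
    _ ≤ J φ := EReal.coe_ennreal_le_coe_ennreal_iff.2 hJ

theorem nearE_eq_nearScaled (E : Set (Sp d)) (q : Sp d) {n : ℝ} (δ : ℝ) (hn : 0 < n) :
    nearE E q n δ = nearScaled E n⁻¹ q δ := by
  ext z
  refine and_congr_right fun _ => ?_
  rw [show n⁻¹ • z - q = n⁻¹ • (z - n • q) by rw [smul_sub, inv_smul_smul₀ hn.ne'],
    norm_smul, Real.norm_of_nonneg (inv_nonneg.2 hn.le), inv_mul_lt_iff₀ hn, mul_comm]

theorem norm_le_skorohodDist_scaledPath {ω : Path d} (hω : CadlagOn ω) {n T s : ℝ}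
    (hn : 0 < n) (hs : s ∈ Icc 0 (T * n)) :
    n⁻¹ * ‖ω s‖ ≤ skorohodDist T 0 (scaledPath n⁻¹ ω) := by
  have hnorm : ∀ t, ‖scaledPath n⁻¹ ω t‖ = n⁻¹ * ‖ω (t * n)‖ := fun t => by
    rw [scaledPath, norm_smul, Real.norm_of_nonneg (inv_nonneg.2 hn.le), div_inv_eq_mul]
  have hbdd : BddAbove ((‖scaledPath n⁻¹ ω ·‖) '' Icc 0 T) := by
    obtain ⟨C, hC⟩ := hω.bddAbove_norm_Icc (T * n)
    rw [mem_upperBounds, forall_mem_image] at hC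
    refine ⟨n⁻¹ * C, forall_mem_image.2 fun t ht => ?_⟩
    rw [hnorm]
    exact mul_le_mul_of_nonneg_left
      (hC ⟨mul_nonneg ht.1 hn.le, mul_le_mul_of_nonneg_right ht.2 hn.le⟩) (inv_nonneg.2 hn.le)
  have hu : s / n ∈ Icc 0 T := ⟨div_nonneg hs.1 hn.le, (div_le_iff₀ hn).2 hs.2⟩
  simpa only [hnorm, div_mul_cancel₀ s hn.ne'] using norm_le_skorohodDist_zero hbdd hu

/-- `exitTime` is an infimum, so `τ_{nρ} ≤ T n` only yields a time `< T' n` at which the path is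
outside the ball; hence the longer horizon `T'`. -/
theorem scaledPath_not_mem_skorohodBall {ω : Path d} (hω : CadlagOn ω) {n T T' ρ : ℝ}
    (hn : 0 < n) (hT' : 0 < T') (hTT' : T < T')
    (hexit : exitTime ω (n * ρ) ≤ ENNReal.ofReal (T * n)) :
    scaledPath n⁻¹ ω ∉ skorohodBall T' 0 ρ := by
  have hlt : exitTime ω (n * ρ) < ENNReal.ofReal (T' * n) :=
    hexit.trans_lt ((ENNReal.ofReal_lt_ofReal_iff (by positivity)).2 (by nlinarith))
  obtain ⟨s, hs, hsρ⟩ := exists_norm_ge_of_exitTime_lt hlt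
  refine not_lt.2 (le_trans ?_ (norm_le_skorohodDist_scaledPath hω hn hs))
  rw [← inv_mul_cancel_left₀ hn.ne' ρ]
  exact mul_le_mul_of_nonneg_left hsρ (inv_nonneg.2 hn.le)

theorem iSup_exitProb_le_iSup_scaled (M : MarkovSetup d) (q : Sp d) {n T T' ρ δ : ℝ}
    (hn : 0 < n) (hT' : 0 < T') (hTT' : T < T') :
    ⨆ z ∈ nearE M.E q n δ, M.P z {ω | exitTime ω (n * ρ) ≤ ENNReal.ofReal (T * n)} ≤
      ⨆ z ∈ nearScaled M.E n⁻¹ q δ,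
        M.P z {ω | scaledPath n⁻¹ ω ∈ (skorohodBall T' 0 ρ)ᶜ} := by
  rw [nearE_eq_nearScaled M.E q δ hn]
  refine iSup₂_mono fun z hz => measure_mono_ae ?_
  filter_upwards [M.cadlag z hz.1] with ω hω hexit
  exact scaledPath_not_mem_skorohodBall hω hn hT' hTT' hexit

theorem limsup_nat_le_limsup_nhdsGT_zero {β : Type*} [CompleteLattice β] {f : ℕ → β}
    {g : ℝ → β} (h : ∀ᶠ n : ℕ in atTop, f n ≤ g (n : ℝ)⁻¹) :
    limsup f atTop ≤ limsup g (𝓝[>] 0) :=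
  (limsup_le_limsup h).trans
    (tendsto_inv_atTop_nhdsGT_zero.comp tendsto_natCast_atTop_atTop).limsup_comp_le_limsup

/-- Under (H1') (sample path LDP with good rate functions), for
every `T > 0`, `q ∈ ℝ^d` and `A > 0` there is `R > 0` such that
`lim_{δ→0} limsup_{n→∞} sup_{z∈E,|z−nq|<δn} (1/n) log ℙ_z(τ_{nR} ≤ Tn) ≤ −A`. -/
theorem exit_prob_bound
    {d : ℕ} (M : MarkovSetup d) (Ipath : ℝ → Path d → ℝ≥0∞)
    (hSPLD : ∀ T : ℝ, 0 < T → SPLD M.E M.P T (Ipath T)) :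
    ∀ T : ℝ, 0 < T → ∀ q : Sp d, ∀ A : ℝ, 0 < A → ∃ R : ℝ, 0 < R ∧
      (⨅ δ : {δ : ℝ // 0 < δ},
        limsup (fun n : ℕ =>
          ((((n : ℝ)⁻¹ : ℝ)) : EReal) * ENNReal.log
            (⨆ z ∈ nearE M.E q n δ.1,
              M.P z {ω | exitTime ω ((n : ℝ) * R) ≤ ENNReal.ofReal (T * n)}))
          atTop)
        ≤ -(A : EReal) := by
  intro T hT q A hA
  have hT' : 0 < T + 1 := by linarith
  obtain ⟨hgood, -, hupper⟩ := hSPLD (T + 1) hT'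
  obtain ⟨ρ, hρ, hsub⟩ := hgood.exists_sublevel_subset_skorohodBall q hA.le
  refine ⟨ρ, hρ, ?_⟩
  have hclosed : IsClosed[skorohodTop d (T + 1)] (skorohodBall (T + 1) 0 ρ)ᶜ :=
    @isClosed_compl_iff _ (skorohodTop d (T + 1)) _ |>.2 (isOpen_skorohodBall 0 hρ)
  calc _ ≤ _ := iInf_mono fun δ => limsup_nat_le_limsup_nhdsGT_zero <| by
          filter_upwards [eventually_gt_atTop 0] with n hn
          have hn' : (0 : ℝ) < n := Nat.cast_pos.2 hn
          exact mul_le_mul_of_nonneg_left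
            (ENNReal.log_monotone (iSup_exitProb_le_iSup_scaled M q hn' hT' (lt_add_one T)))
            (EReal.coe_nonneg.2 (inv_nonneg.2 hn'.le))
    _ ≤ _ := hupper q _ hclosed
    _ ≤ -(A : EReal) := EReal.neg_le_neg_iff.2 (coe_le_iInf_of_sublevel_subset hA.le hsub)

end GreenLDP
end
end
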